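/- arXiv:2312.13791 — 6 statements merged into one kernel-verified Lean document; each statement's English description precedes it below -/
import Mathlib

section
/- Let v be an additive valuation, S a finite set of goods, g an element not in S, and α ∈ (0,1]. If v(A) ≥ α·μ(S) where μ denotes the 1-out-of-2 maximin share, then v(A) + v(g) ≥ α·μ(S ∪ {g}). -/
noncomputable def mms {G : Type*} [DecidableEq G] (val : G → ℝ) (S : Finset G) : ℝ :=
  S.powerset.sup' ⟨∅, Finset.empty_mem_powerset S⟩
    (fun X => min (∑ g ∈ X, val g) (∑ g ∈ S \ X, val g))

namespace Finset

variable {G : Type*} [DecidableEq G] {val : G → ℝ}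

lemma sum_le_sum_add_of_subset_insert (hval : ∀ x, 0 ≤ val x) {s t : Finset G} {a : G}
    (hst : s ⊆ insert a t) : ∑ x ∈ s, val x ≤ ∑ x ∈ t, val x + val a := by
  calc ∑ x ∈ s, val x ≤ ∑ x ∈ insert a t, val x :=
        sum_le_sum_of_subset_of_nonneg hst fun x _ _ => hval x
    _ ≤ ∑ x ∈ t, val x + val a := by
        by_cases ha : a ∈ t
        · rw [insert_eq_of_mem ha]
          exact le_add_of_nonneg_right (hval a)
        · rw [sum_insert ha, add_comm]

end Finset

section

variable {G : Type*} [DecidableEq G] {val : G → ℝ}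

lemma min_le_mms {S X : Finset G} (hX : X ⊆ S) :
    min (∑ g ∈ X, val g) (∑ g ∈ S \ X, val g) ≤ mms val S :=
  Finset.le_sup' (fun X => min (∑ g ∈ X, val g) (∑ g ∈ S \ X, val g))
    (Finset.mem_powerset.mpr hX)

/-- A partition `X` of `S ∪ {g}` restricts to the partition `X.erase g` of `S`, and each side
loses at most `val g`. -/
lemma mms_union_singleton_le (hval : ∀ x, 0 ≤ val x) (S : Finset G) (g : G) :
    mms val (S ∪ {g}) ≤ mms val S + val g := by
  refine Finset.sup'_le _ _ fun X hX => ?_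
  have hXS : X.erase g ⊆ S := by
    rw [← Finset.subset_insert_iff, Finset.insert_eq, Finset.union_comm]
    exact Finset.mem_powerset.mp hX
  have hcompl : (S ∪ {g}) \ X ⊆ insert g (S \ X.erase g) := by
    intro x
    simp only [Finset.mem_sdiff, Finset.mem_union, Finset.mem_singleton, Finset.mem_insert,
      Finset.mem_erase]
    tauto
  calc min (∑ x ∈ X, val x) (∑ x ∈ (S ∪ {g}) \ X, val x)
      ≤ min (∑ x ∈ X.erase g, val x + val g) (∑ x ∈ S \ X.erase g, val x + val g) :=
        min_le_min (Finset.sum_le_sum_add_of_subset_insert hval (Finset.insert_erase_subset g X))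
          (Finset.sum_le_sum_add_of_subset_insert hval hcompl)
    _ = min (∑ x ∈ X.erase g, val x) (∑ x ∈ S \ X.erase g, val x) + val g :=
        min_add_add_right _ _ _
    _ ≤ mms val S + val g := add_le_add_left (min_le_mms hXS) _

end

theorem mms_add_good_general {G : Type*} [DecidableEq G] (val : G → ℝ)
    (hval : ∀ g, 0 ≤ val g) (S A : Finset G) (g : G)
    (α : ℝ) (hα0 : 0 < α) (hα1 : α ≤ 1)
    (hA : ∑ x ∈ A, val x ≥ α * mms val S) :
    (∑ x ∈ A, val x) + val g ≥ α * mms val (S ∪ {g}) := by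
  calc α * mms val (S ∪ {g}) ≤ α * (mms val S + val g) :=
        mul_le_mul_of_nonneg_left (mms_union_singleton_le hval S g) hα0.le
    _ = α * mms val S + α * val g := mul_add _ _ _
    _ ≤ (∑ x ∈ A, val x) + val g :=
        add_le_add hA (mul_le_of_le_one_left (hval g) hα1)

theorem mms_add_good {G : Type*} [DecidableEq G] (val : G → ℝ)
    (hval : ∀ g, 0 ≤ val g) (S A : Finset G) (g : G) (hg : g ∉ S)
    (α : ℝ) (hα0 : 0 < α) (hα1 : α ≤ 1)
    (hA : ∑ x ∈ A, val x ≥ α * mms val S) :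
    (∑ x ∈ A, val x) + val g ≥ α * mms val (S ∪ {g}) :=
  mms_add_good_general val hval S A g α hα0 hα1 hA
end

section
/- Let v be an additive valuation, A and B disjoint finite sets of goods with v(B) ≤ (1 + 1/k)·v(A) where k = |A| ≥ 3 (interpreting as: v(B) ≤ ((k+1)/k)·v(A)). Then the 1-out-of-2 maximin share μ(A ∪ B) satisfies v(A) ≥ (2k/(2k+1))·μ(A ∪ B); in particular, for k ≥ 3, v(A) ≥ (6/7)·μ(A ∪ B). -/
section

variable {G : Type*} [DecidableEq G] (val : G → ℝ)

theorem two_mul_mms_le_sum (S : Finset G) : 2 * mms val S ≤ ∑ g ∈ S, val g := by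
  suffices mms val S ≤ (∑ g ∈ S, val g) / 2 by linarith
  refine Finset.sup'_le _ _ fun X hX => ?_
  have hsplit := Finset.sum_sdiff (f := val) (Finset.mem_powerset.mp hX)
  linarith [min_le_left (∑ g ∈ X, val g) (∑ g ∈ S \ X, val g),
    min_le_right (∑ g ∈ X, val g) (∑ g ∈ S \ X, val g)]

theorem mms_nonneg (hval : ∀ g, 0 ≤ val g) (S : Finset G) : 0 ≤ mms val S := by
  have hle := Finset.le_sup' (fun X => min (∑ g ∈ X, val g) (∑ g ∈ S \ X, val g))
    (Finset.empty_mem_powerset S)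
  simp only [Finset.sum_empty, Finset.sdiff_empty] at hle
  exact (le_min le_rfl (Finset.sum_nonneg fun g _ => hval g)).trans hle

theorem mms_union_le_of_sum_le {A B : Finset G} (hAB : Disjoint A B) {x : ℝ} (hx : 0 < x)
    (hB : ∑ g ∈ B, val g ≤ (x + 1) / x * ∑ g ∈ A, val g) :
    2 * x / (2 * x + 1) * mms val (A ∪ B) ≤ ∑ g ∈ A, val g := by
  have hμ := two_mul_mms_le_sum val (A ∪ B)
  rw [Finset.sum_union hAB] at hμ
  rw [div_mul_eq_mul_div, le_div_iff₀ hx, mul_comm] at hB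
  rw [div_mul_eq_mul_div, div_le_iff₀ (by linarith)]
  nlinarith [mul_le_mul_of_nonneg_left hμ hx.le]

end

theorem mms_large_bundle_general {G : Type*} [DecidableEq G] (val : G → ℝ)
    (hval : ∀ g, 0 ≤ val g) (A B : Finset G) (hAB : Disjoint A B)
    (k : ℕ) (hk3 : 3 ≤ k)
    (hB : ∑ g ∈ B, val g ≤ ((k : ℝ) + 1) / k * ∑ g ∈ A, val g) :
    ∑ g ∈ A, val g ≥ (2 * (k : ℝ)) / (2 * k + 1) * mms val (A ∪ B) ∧
    ∑ g ∈ A, val g ≥ 6 / 7 * mms val (A ∪ B) := by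
  have hk : (3 : ℝ) ≤ k := by exact_mod_cast hk3
  have hbound := mms_union_le_of_sum_le val hAB (by linarith) hB
  have hratio : (6 : ℝ) / 7 ≤ 2 * k / (2 * k + 1) := by
    rw [div_le_div_iff₀ (by norm_num) (by linarith)]
    linarith
  exact ⟨hbound,
    (mul_le_mul_of_nonneg_right hratio (mms_nonneg val hval _)).trans hbound⟩

theorem mms_large_bundle {G : Type*} [DecidableEq G] (val : G → ℝ)
    (hval : ∀ g, 0 ≤ val g) (A B : Finset G) (hAB : Disjoint A B)
    (k : ℕ) (hk : A.card = k) (hk3 : 3 ≤ k)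
    (hB : ∑ g ∈ B, val g ≤ ((k : ℝ) + 1) / k * ∑ g ∈ A, val g) :
    ∑ g ∈ A, val g ≥ (2 * (k : ℝ)) / (2 * k + 1) * mms val (A ∪ B) ∧
    ∑ g ∈ A, val g ≥ 6 / 7 * mms val (A ∪ B) :=
  mms_large_bundle_general val hval A B hAB k hk3 hB
end

section
/- Let v be an additive valuation and A, B disjoint finite sets of goods with |A| = 1, say A = {a}, and suppose v(a) ≥ v(B ∖ {g}) for every g ∈ B with v(g) > 0 (equivalently, removing the least-valued positively-valued good of B leaves value at most v(a)), and moreover every positively-valued good of B has value at least the minimum positively-valued good. If additionally v(B minus its least positively-valued good) ≤ v(A), then the 1-out-of-2 maximin share of A ∪ B is at most v(A). -/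
open Finset

theorem mms_le_of_forall_mem {G : Type*} [DecidableEq G] (val : G → ℝ) {S : Finset G} {a : G}
    {c : ℝ} (ha : a ∈ S)
    (h : ∀ X ⊆ S, a ∈ X → min (∑ g ∈ X, val g) (∑ g ∈ S \ X, val g) ≤ c) :
    mms val S ≤ c := by
  refine sup'_le _ _ fun X hX => ?_
  rw [mem_powerset] at hX
  by_cases haX : a ∈ X
  · exact h X hX haX
  · have := h (S \ X) sdiff_subset (mem_sdiff.mpr ⟨ha, haX⟩)
    rwa [Finset.sdiff_sdiff_eq_self hX, min_comm] at this

section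

variable {G : Type*} {val : G → ℝ} {B : Finset G} {ghat : G}

theorem sum_eq_zero_or_le_sum (hval : ∀ g, 0 ≤ val g)
    (hmin : ∀ g ∈ B, 0 < val g → val ghat ≤ val g) {P : Finset G} (hP : P ⊆ B) :
    ∑ g ∈ P, val g = 0 ∨ val ghat ≤ ∑ g ∈ P, val g := by
  rw [or_iff_not_imp_left]
  intro hne
  obtain ⟨g, hg, hg0⟩ := exists_ne_zero_of_sum_ne_zero hne
  calc val ghat ≤ val g := hmin g (hP hg) ((hval g).lt_of_ne' hg0)
    _ ≤ ∑ g ∈ P, val g := single_le_sum (fun g _ => hval g) hg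

theorem min_add_sum_sum_le [DecidableEq G] (hval : ∀ g, 0 ≤ val g)
    (hmin : ∀ g ∈ B, 0 < val g → val ghat ≤ val g) {c : ℝ}
    (hle : ∑ g ∈ B \ {ghat}, val g ≤ c) {P Q : Finset G} (hP : P ⊆ B) (hQ : Q ⊆ B)
    (hPQ : Disjoint P Q) :
    min (c + ∑ g ∈ P, val g) (∑ g ∈ Q, val g) ≤ c := by
  have sum_le {T : Finset G} (hT : T ⊆ B \ {ghat}) : ∑ g ∈ T, val g ≤ c :=
    (sum_le_sum_of_subset_of_nonneg hT fun g _ _ => hval g).trans hle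
  by_cases hQg : ghat ∈ Q
  · have hPQ' : P ∪ Q.erase ghat ⊆ B \ {ghat} := by
      intro g hg
      simp only [mem_union, mem_erase, mem_sdiff, mem_singleton] at hg ⊢
      rcases hg with hgP | ⟨hne, hgQ⟩
      · exact ⟨hP hgP, fun h => disjoint_left.mp hPQ hgP (h ▸ hQg)⟩
      · exact ⟨hQ hgQ, hne⟩
    have hsum : ∑ g ∈ P, val g + ∑ g ∈ Q.erase ghat, val g ≤ c := by
      rw [← sum_union (hPQ.mono_right (erase_subset _ _))]
      exact sum_le hPQ'
    have hQsum := add_sum_erase Q val hQg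
    rcases sum_eq_zero_or_le_sum hval hmin hP with hP0 | hPg
    · exact min_le_of_left_le (by rw [hP0, add_zero])
    · exact min_le_of_right_le (by linarith)
  · refine min_le_of_right_le (sum_le fun g hg => ?_)
    exact mem_sdiff.mpr ⟨hQ hg, fun h => hQg (mem_singleton.mp h ▸ hg)⟩

end

theorem mms_singleton_bundle_general {G : Type*} [DecidableEq G] (val : G → ℝ)
    (hval : ∀ g, 0 ≤ val g) (a : G) (B : Finset G)
    (ghat : G)
    (hmin : ∀ g ∈ B, 0 < val g → val ghat ≤ val g)
    (hle : ∑ g ∈ B \ {ghat}, val g ≤ val a) :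
    mms val ({a} ∪ B) ≤ val a := by
  refine mms_le_of_forall_mem val (mem_union_left _ (mem_singleton_self a)) fun X hX haX => ?_
  have hP : X.erase a ⊆ B := fun g hg => by
    simpa [(mem_erase.mp hg).1] using hX (mem_of_mem_erase hg)
  have hQ : ({a} ∪ B) \ X ⊆ B := fun g hg => by
    simp only [mem_sdiff, mem_union, mem_singleton] at hg
    exact hg.1.resolve_left fun h => hg.2 (h ▸ haX)
  have hPQ : Disjoint (X.erase a) (({a} ∪ B) \ X) :=
    disjoint_sdiff.mono_left (erase_subset a X)
  rw [← add_sum_erase X val haX]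
  exact min_add_sum_sum_le hval hmin hle hP hQ hPQ

theorem mms_singleton_bundle {G : Type*} [DecidableEq G] (val : G → ℝ)
    (hval : ∀ g, 0 ≤ val g) (a : G) (B : Finset G) (ha : a ∉ B)
    (ghat : G) (hghat : ghat ∈ B)
    (hmin : ∀ g ∈ B, 0 < val g → val ghat ≤ val g)
    (hle : ∑ g ∈ B \ {ghat}, val g ≤ val a) :
    mms val ({a} ∪ B) ≤ val a :=
  mms_singleton_bundle_general val hval a B ghat hmin hle
end

section
/- Suppose all agents' valuations satisfy the restricted-additive property: there is a base value function v̄ on goods such that for every agent i and good g, v_i(g) ∈ {0, v̄(g)}. If each agent's bundle consists only of goods she positively values (A_i ⊆ P_i for all i), then the envy graph of the allocation is acyclic. -/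
/-!
With `v̄(S) := ∑_{g ∈ S} v̄ g`, an agent holding only goods she values sees her own bundle at its full
`v̄`-value, and any other bundle at no more than its `v̄`-value. So an envy edge `i → j` forces
`v̄(A_i) < v̄(A_j)`: `v̄` of the bundle strictly increases along every edge of the envy graph, which
therefore has no cycle.
-/

open Finset

section RestrictedSum

variable {G : Type*} {f g : G → ℝ}

theorem sum_eq_sum_of_restricted {s : Finset G} (hres : ∀ x, f x = 0 ∨ f x = g x)
    (hpos : ∀ x ∈ s, 0 < f x) : ∑ x ∈ s, f x = ∑ x ∈ s, g x :=
  sum_congr rfl fun x hx => (hres x).resolve_left (hpos x hx).ne'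

theorem sum_le_sum_of_restricted (s : Finset G) (hres : ∀ x, f x = 0 ∨ f x = g x)
    (hg : ∀ x, 0 ≤ g x) : ∑ x ∈ s, f x ≤ ∑ x ∈ s, g x :=
  sum_le_sum fun x _ => by rcases hres x with h | h <;> simp only [h, hg x, le_refl]

theorem sum_lt_sum_of_restricted_of_lt {s t : Finset G} (hres : ∀ x, f x = 0 ∨ f x = g x)
    (hg : ∀ x, 0 ≤ g x) (hpos : ∀ x ∈ s, 0 < f x)
    (henvy : ∑ x ∈ s, f x < ∑ x ∈ t, f x) : ∑ x ∈ s, g x < ∑ x ∈ t, g x :=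
  calc ∑ x ∈ s, g x = ∑ x ∈ s, f x := (sum_eq_sum_of_restricted hres hpos).symm
    _ < ∑ x ∈ t, f x := henvy
    _ ≤ ∑ x ∈ t, g x := sum_le_sum_of_restricted t hres hg

end RestrictedSum

theorem restricted_additive_envy_acyclic_general {G : Type*} (n : ℕ)
    (val : Fin n → G → ℝ) (vbar : G → ℝ) (hvbar : ∀ g, 0 < vbar g)
    (hres : ∀ i g, val i g = 0 ∨ val i g = vbar g)
    (A : Fin n → Finset G)
    (hPos : ∀ i, ∀ g ∈ A i, 0 < val i g) :
    ¬ ∃ (k : ℕ) (c : ℕ → Fin n), 0 < k ∧ c k = c 0 ∧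
      ∀ t < k,
        ∑ g ∈ A (c t), val (c t) g < ∑ g ∈ A (c (t + 1)), val (c t) g := by
  rintro ⟨k, c, hk, hck, henvy⟩
  set W : ℕ → ℝ := fun t => ∑ g ∈ A (c t), vbar g
  have hstep : ∀ t < k, W t < W (t + 1) := fun t ht =>
    sum_lt_sum_of_restricted_of_lt (hres (c t)) (fun g => (hvbar g).le) (hPos (c t)) (henvy t ht)
  have hmono : StrictMonoOn W (Set.Iic k) := strictMonoOn_Iic_of_lt_succ hstep
  have hcycle : W 0 < W k := hmono (Set.mem_Iic.2 k.zero_le) Set.self_mem_Iic hk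
  simp only [W, hck] at hcycle
  exact lt_irrefl _ hcycle

theorem restricted_additive_envy_acyclic {G : Type*} [DecidableEq G] (n : ℕ)
    (val : Fin n → G → ℝ) (vbar : G → ℝ) (hvbar : ∀ g, 0 < vbar g)
    (hres : ∀ i g, val i g = 0 ∨ val i g = vbar g)
    (A : Fin n → Finset G)
    (hdisj : ∀ i j, i ≠ j → Disjoint (A i) (A j))
    (hPos : ∀ i, ∀ g ∈ A i, 0 < val i g) :
    ¬ ∃ (k : ℕ) (c : ℕ → Fin n), 0 < k ∧ c k = c 0 ∧
      ∀ t < k,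
        ∑ g ∈ A (c t), val (c t) g < ∑ g ∈ A (c (t + 1)), val (c t) g :=
  restricted_additive_envy_acyclic_general n val vbar hvbar hres A hPos
end

section
/- Let v be an additive nonnegative valuation, S a finite set of goods, ℓ ∈ S with v(ℓ) > 0, and ĝ ∉ S with v(ĝ) > 0 satisfying v(ℓ) ≥ γ·v(ĝ) for γ ∈ (0,1]. If v(A) ≥ v(S) for a set A, then v(A ∪ {ℓ}) ≥ min(1, 2γ)·v((S ∪ {ĝ}) ∖ {ℓ}). -/
/-!
Write `E = v(S ∖ {ℓ})`, so that `v(S) = E + v(ℓ)` and, as `ĝ ∉ S`, `v((S ∪ {ĝ}) ∖ {ℓ}) = E + v(ĝ)`.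
Since `ℓ ∉ A`, `v(A ∪ {ℓ}) = v(A) + v(ℓ) ≥ E + 2 v(ℓ) ≥ E + 2γ v(ĝ) ≥ min(1, 2γ) (E + v(ĝ))`.
-/

open Finset

theorem min_one_two_mul_mul_add_le {γ e g l a : ℝ} (he : 0 ≤ e) (hg : 0 ≤ g)
    (hl : γ * g ≤ l) (ha : e + l ≤ a) : min 1 (2 * γ) * (e + g) ≤ a + l :=
  calc min 1 (2 * γ) * (e + g) = min 1 (2 * γ) * e + min 1 (2 * γ) * g := mul_add _ _ _
    _ ≤ 1 * e + 2 * γ * g := by gcongr <;> simp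
    _ ≤ a + l := by linarith

theorem Finset.sum_union_singleton_sdiff_singleton {ι M : Type*} [DecidableEq ι]
    [AddCommMonoid M] (f : ι → M) {s : Finset ι} {a b : ι} (ha : a ∉ s) (hab : a ≠ b) :
    ∑ x ∈ (s ∪ {a}) \ {b}, f x = f a + ∑ x ∈ s.erase b, f x := by
  rw [union_singleton, sdiff_singleton_eq_erase, erase_insert_of_ne hab,
    sum_insert fun h => ha (mem_of_mem_erase h)]

theorem tefx_transfer_general {G : Type*} [DecidableEq G] (val : G → ℝ)
    (hval : ∀ g, 0 ≤ val g)
    (A S : Finset G) (ℓ ghat : G)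
    (hℓ : ℓ ∈ S) (hghat : ghat ∉ S) (hdisj : Disjoint A (S ∪ {ghat}))
    (γ : ℝ)
    (hvℓ : val ℓ ≥ γ * val ghat)
    (hA : ∑ g ∈ A, val g ≥ ∑ g ∈ S, val g) :
    ∑ g ∈ A ∪ {ℓ}, val g ≥
      min 1 (2 * γ) * ∑ g ∈ (S ∪ {ghat}) \ {ℓ}, val g := by
  have hℓA : ℓ ∉ A := fun h => disjoint_left.mp hdisj h (mem_union_left _ hℓ)
  have hghatℓ : ghat ≠ ℓ := fun h => hghat (h ▸ hℓ)
  rw [union_singleton, sum_insert hℓA, add_comm,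
    sum_union_singleton_sdiff_singleton val hghat hghatℓ, add_comm (val ghat)]
  refine min_one_two_mul_mul_add_le (sum_nonneg fun g _ => hval g) (hval ghat) hvℓ ?_
  rw [sum_erase_add S val hℓ]
  exact hA

theorem tefx_transfer {G : Type*} [DecidableEq G] (val : G → ℝ)
    (hval : ∀ g, 0 ≤ val g)
    (A S : Finset G) (ℓ ghat : G)
    (hℓ : ℓ ∈ S) (hghat : ghat ∉ S) (hdisj : Disjoint A (S ∪ {ghat}))
    (γ : ℝ) (hγ0 : 0 < γ) (hγ1 : γ ≤ 1)
    (hvℓ : val ℓ ≥ γ * val ghat)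
    (hA : ∑ g ∈ A, val g ≥ ∑ g ∈ S, val g) :
    ∑ g ∈ A ∪ {ℓ}, val g ≥
      min 1 (2 * γ) * ∑ g ∈ (S ∪ {ghat}) \ {ℓ}, val g :=
  tefx_transfer_general val hval A S ℓ ghat hℓ hghat hdisj γ hvℓ hA
end

section
/- Let v be an additive nonnegative valuation and A, B disjoint finite sets of goods. Suppose every good in B that v values positively has value ≥ v(ĝ) for a distinguished good ĝ ∈ B, v(B ∖ {ĝ}) ≤ v(A), and v(ĝ) ≤ (1/3)·v(A). Then the 1-out-of-2 maximin share μ(A ∪ B) satisfies v(A) ≥ (6/7)·μ(A ∪ B). -/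
theorem mms_le_half_sum {G : Type*} [DecidableEq G] (val : G → ℝ) (S : Finset G) :
    mms val S ≤ (∑ g ∈ S, val g) / 2 := by
  refine Finset.sup'_le _ _ fun X hX => ?_
  have hsplit : ∑ g ∈ S \ X, val g + ∑ g ∈ X, val g = ∑ g ∈ S, val g :=
    Finset.sum_sdiff (Finset.mem_powerset.mp hX)
  rcases le_total (∑ g ∈ X, val g) (∑ g ∈ S \ X, val g) with hle | hle
  · rw [min_eq_left hle]; linarith
  · rw [min_eq_right hle]; linarith

theorem mms_two_goods_small_ghat_general {G : Type*} [DecidableEq G] (val : G → ℝ)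
    (A B : Finset G) (hAB : Disjoint A B)
    (ghat : G) (hghat : ghat ∈ B)
    (hle : ∑ g ∈ B \ {ghat}, val g ≤ ∑ g ∈ A, val g)
    (hghat_small : val ghat ≤ 1 / 3 * ∑ g ∈ A, val g) :
    ∑ g ∈ A, val g ≥ 6 / 7 * mms val (A ∪ B) := by
  have hB : ∑ g ∈ B, val g = ∑ g ∈ B \ {ghat}, val g + val ghat :=
    Finset.sum_eq_sum_sdiff_singleton_add hghat val
  have hunion : ∑ g ∈ A ∪ B, val g = ∑ g ∈ A, val g + ∑ g ∈ B, val g :=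
    Finset.sum_union hAB
  linarith [mms_le_half_sum val (A ∪ B)]

theorem mms_two_goods_small_ghat {G : Type*} [DecidableEq G] (val : G → ℝ)
    (hval : ∀ g, 0 ≤ val g) (A B : Finset G) (hAB : Disjoint A B)
    (ghat : G) (hghat : ghat ∈ B)
    (hmin : ∀ g ∈ B, 0 < val g → val ghat ≤ val g)
    (hle : ∑ g ∈ B \ {ghat}, val g ≤ ∑ g ∈ A, val g)
    (hghat_small : val ghat ≤ 1 / 3 * ∑ g ∈ A, val g) :
    ∑ g ∈ A, val g ≥ 6 / 7 * mms val (A ∪ B) :=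
  mms_two_goods_small_ghat_general val A B hAB ghat hghat hle hghat_small
end
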